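/- arXiv:0708.3201 — 2 statements merged into one kernel-verified Lean document; each statement's English description precedes it below -/
import Mathlib

section
/- Fix n ≥ 1 and m ≥ 2, and suppose P′(n,m−1) holds: for all real symmetric n×n matrices B₁, …, B_{m−1}, 2 Σ_{1≤i<j≤m−1} ‖[B_i,B_j]‖² ≤ (3/2)(Σ ‖B_i‖²)² − Σ ‖B_i‖⁴. Suppose furthermore that the inequality P′(n,m), namely 2 Σ_{1≤i<j≤m} ‖[A_i,A_j]‖² ≤ (3/2)(Σ_{i=1}^m ‖A_i‖²)² − Σ_{i=1}^m ‖A_i‖⁴, holds for all real symmetric n×n matrices A₁, …, A_m satisfying ‖A₁‖² ≤ Σ_{i=2}^m ‖A_i‖². Then P′(n,m) holds for all real symmetric n×n matrices A₁, …, A_m satisfying ‖A₁‖ ≥ ‖A₂‖ ≥ … ≥ ‖A_m‖. -/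
open Matrix BigOperators

/-- Frobenius norm squared of a real `n × n` matrix: the sum of the squares of all entries. -/
noncomputable def frobSq {n : ℕ} (A : Matrix (Fin n) (Fin n) ℝ) : ℝ :=
  ∑ i, ∑ j, (A i j) ^ 2

/-- The commutator `[A, B] = A * B - B * A`. -/
def mcomm {n : ℕ} (A B : Matrix (Fin n) (Fin n) ℝ) : Matrix (Fin n) (Fin n) ℝ :=
  A * B - B * A

/-! If `‖A₁‖² ≤ Σ_{i ≥ 2} ‖A_i‖²` the hypothesis applies directly. Otherwise rescale `A₁` by
`c ∈ [0, 1]` so that `c² ‖A₁‖² = s := Σ_{i ≥ 2} ‖A_i‖²` and apply the hypothesis to the rescaled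
family. Only the commutators `[A₁, A_j]` change, by the factor `c²`, and for symmetric `A₁` they
obey the Böttcher–Wenzel type bound `‖[A₁, B]‖² ≤ 2 ‖A₁‖² ‖B‖²` (diagonalize `A₁` orthogonally).
With `a = ‖A₁‖²`, what remains to be checked is `(a - s)² / 2 ≥ 0`. -/

section Frobenius

variable {n : ℕ}

lemma frobSq_nonneg (A : Matrix (Fin n) (Fin n) ℝ) : 0 ≤ frobSq A := by
  unfold frobSq; positivity

lemma frobSq_smul (c : ℝ) (A : Matrix (Fin n) (Fin n) ℝ) :
    frobSq (c • A) = c ^ 2 * frobSq A := by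
  simp [frobSq, Finset.mul_sum, mul_pow]

lemma frobSq_diagonal (d : Fin n → ℝ) : frobSq (diagonal d) = ∑ i, d i ^ 2 := by
  simp [frobSq, diagonal_apply, ite_pow]

lemma frobSq_eq_trace (A : Matrix (Fin n) (Fin n) ℝ) : frobSq A = (star A * A).trace := by
  simp only [frobSq, trace, diag, mul_apply, star_apply, star_trivial, ← sq]
  exact Finset.sum_comm

lemma frobSq_conjStarAlgAut (U : unitary (Matrix (Fin n) (Fin n) ℝ))
    (M : Matrix (Fin n) (Fin n) ℝ) : frobSq (Unitary.conjStarAlgAut ℝ _ U M) = frobSq M := by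
  set u : Matrix (Fin n) (Fin n) ℝ := ↑U
  have hu : star u * u = 1 := Unitary.coe_star_mul_self U
  calc frobSq (u * M * star u) = (u * (star M * (star u * u) * M) * star u).trace := by
        simp only [frobSq_eq_trace, star_mul, star_star, mul_assoc]
    _ = frobSq M := by rw [hu, mul_one, trace_mul_cycle, hu, one_mul, frobSq_eq_trace]

lemma mcomm_smul_left (c : ℝ) (A B : Matrix (Fin n) (Fin n) ℝ) :
    mcomm (c • A) B = c • mcomm A B := by
  simp [mcomm, smul_sub]

lemma sq_sub_le_two_mul_sum_sq {ι : Type*} [Fintype ι] (d : ι → ℝ) (i j : ι) :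
    (d i - d j) ^ 2 ≤ 2 * ∑ k, d k ^ 2 := by
  classical
  rcases eq_or_ne i j with rfl | hij
  · simp only [sub_self, ne_eq, OfNat.ofNat_ne_zero, not_false_eq_true, zero_pow]
    positivity
  · have hpair : d i ^ 2 + d j ^ 2 ≤ ∑ k, d k ^ 2 :=
      calc d i ^ 2 + d j ^ 2 = ∑ k ∈ {i, j}, d k ^ 2 :=
            (Finset.sum_pair (f := fun k => d k ^ 2) hij).symm
        _ ≤ ∑ k, d k ^ 2 := Finset.sum_le_univ_sum_of_nonneg fun k => sq_nonneg _
    nlinarith [sq_nonneg (d i + d j)]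

lemma frobSq_mcomm_diagonal_le (d : Fin n → ℝ) (C : Matrix (Fin n) (Fin n) ℝ) :
    frobSq (mcomm (diagonal d) C) ≤ 2 * (∑ k, d k ^ 2) * frobSq C := by
  have hentry : ∀ i j, mcomm (diagonal d) C i j = (d i - d j) * C i j := fun i j => by
    simp only [mcomm, Matrix.sub_apply, diagonal_mul, mul_diagonal]; ring
  calc frobSq (mcomm (diagonal d) C) = ∑ i, ∑ j, (d i - d j) ^ 2 * C i j ^ 2 := by
        simp only [frobSq, hentry, mul_pow]
    _ ≤ ∑ i, ∑ j, 2 * (∑ k, d k ^ 2) * C i j ^ 2 := by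
        gcongr with i _ j _
        exact sq_sub_le_two_mul_sum_sq d i j
    _ = 2 * (∑ k, d k ^ 2) * frobSq C := by simp only [frobSq, Finset.mul_sum]

lemma frobSq_mcomm_le_of_isSymm {A : Matrix (Fin n) (Fin n) ℝ} (hA : A.IsSymm)
    (B : Matrix (Fin n) (Fin n) ℝ) : frobSq (mcomm A B) ≤ 2 * frobSq A * frobSq B := by
  have hH : A.IsHermitian := by rwa [IsHermitian, conjTranspose_eq_transpose_of_trivial]
  set φ := Unitary.conjStarAlgAut ℝ _ hH.eigenvectorUnitary
  set d := hH.eigenvalues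
  have hA : A = φ (diagonal d) := by
    have := hH.spectral_theorem
    rwa [RCLike.ofReal_real_eq_id, Function.id_comp] at this
  have hcomm : mcomm A B = φ (mcomm (diagonal d) (φ.symm B)) := by
    conv_lhs => rw [hA, ← φ.apply_symm_apply B]
    simp only [mcomm, map_sub, map_mul]
  have hB : frobSq (φ.symm B) = frobSq B := by
    rw [← frobSq_conjStarAlgAut hH.eigenvectorUnitary (φ.symm B)]
    exact congrArg frobSq (φ.apply_symm_apply B)
  rw [hcomm, frobSq_conjStarAlgAut, hA, frobSq_conjStarAlgAut, frobSq_diagonal, ← hB]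
  exact frobSq_mcomm_diagonal_le d _

end Frobenius

lemma sum_sum_ite_lt_fin_succ {M : Type*} [AddCommMonoid M] {k : ℕ}
    (f : Fin (k + 1) → Fin (k + 1) → M) :
    ∑ i, ∑ j, (if i < j then f i j else 0) =
      ∑ j : Fin k, f 0 j.succ +
        ∑ i : Fin k, ∑ j : Fin k, (if i < j then f i.succ j.succ else 0) := by
  simp [Fin.sum_univ_succ, Fin.succ_pos]

/-- The inequality `P′(n, m)` for one family `A` of `m` matrices. -/
def LiLiIneq {n m : ℕ} (A : Fin m → Matrix (Fin n) (Fin n) ℝ) : Prop :=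
  2 * ∑ i, ∑ j, (if i < j then frobSq (mcomm (A i) (A j)) else 0) ≤
    (3 / 2) * (∑ i, frobSq (A i)) ^ 2 - ∑ i, (frobSq (A i)) ^ 2

namespace LiLiIneq

variable {n k : ℕ} {X : Matrix (Fin n) (Fin n) ℝ} {B : Fin k → Matrix (Fin n) (Fin n) ℝ}

lemma of_smul_head (hX : X.IsSymm) {c : ℝ} (hc : c ^ 2 ≤ 1)
    (hcX : c ^ 2 * frobSq X = ∑ i, frobSq (B i)) (h : LiLiIneq (Fin.cons (c • X) B)) :
    LiLiIneq (Fin.cons X B) := by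
  unfold LiLiIneq at h ⊢
  rw [sum_sum_ite_lt_fin_succ] at h ⊢
  simp only [Fin.sum_univ_succ, Fin.cons_zero, Fin.cons_succ, mcomm_smul_left, frobSq_smul,
    ← Finset.mul_sum] at h ⊢
  have hXB : ∑ j, frobSq (mcomm X (B j)) ≤ 2 * frobSq X * ∑ i, frobSq (B i) := by
    rw [Finset.mul_sum]
    exact Finset.sum_le_sum fun j _ => frobSq_mcomm_le_of_isSymm hX (B j)
  nlinarith [mul_nonneg (sub_nonneg.2 hc) (sub_nonneg.2 hXB),
    sq_nonneg (frobSq X - ∑ i, frobSq (B i))]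

lemma of_head_le
    (h : ∀ (X : Matrix (Fin n) (Fin n) ℝ) (B : Fin k → Matrix (Fin n) (Fin n) ℝ), X.IsSymm →
      (∀ i, (B i).IsSymm) → frobSq X ≤ ∑ i, frobSq (B i) → LiLiIneq (Fin.cons X B))
    (hX : X.IsSymm) (hB : ∀ i, (B i).IsSymm) : LiLiIneq (Fin.cons X B) := by
  set s := ∑ i, frobSq (B i)
  by_cases hle : frobSq X ≤ s
  · exact h X B hX hB hle
  have ha : 0 < frobSq X :=
    lt_of_le_of_lt (Finset.sum_nonneg fun i _ => frobSq_nonneg (B i)) (not_le.1 hle)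
  have hc : √(s / frobSq X) ^ 2 = s / frobSq X :=
    Real.sq_sqrt (div_nonneg (Finset.sum_nonneg fun i _ => frobSq_nonneg (B i)) ha.le)
  have hcX : √(s / frobSq X) ^ 2 * frobSq X = s := by rw [hc, div_mul_cancel₀ _ ha.ne']
  refine of_smul_head hX ?_ hcX (h _ B (hX.smul _) hB ?_)
  · rw [hc, div_le_one ha]
    exact le_of_not_ge hle
  · rw [frobSq_smul, hcX]

end LiLiIneq

theorem li_li_reduction_general (n m : ℕ) [NeZero m]
    (h₂ : ∀ A : Fin m → Matrix (Fin n) (Fin n) ℝ, (∀ i, (A i).IsSymm) →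
      frobSq (A 0) ≤ ∑ i ∈ Finset.univ.filter (fun i : Fin m => i ≠ 0), frobSq (A i) →
      2 * ∑ i, ∑ j, (if i < j then frobSq (mcomm (A i) (A j)) else 0) ≤
        (3 / 2) * (∑ i, frobSq (A i)) ^ 2 - ∑ i, (frobSq (A i)) ^ 2) :
    ∀ A : Fin m → Matrix (Fin n) (Fin n) ℝ, (∀ i, (A i).IsSymm) →
      (∀ i j : Fin m, i ≤ j → frobSq (A j) ≤ frobSq (A i)) →
      2 * ∑ i, ∑ j, (if i < j then frobSq (mcomm (A i) (A j)) else 0) ≤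
        (3 / 2) * (∑ i, frobSq (A i)) ^ 2 - ∑ i, (frobSq (A i)) ^ 2 := by
  intro A hA _
  obtain ⟨k, rfl⟩ : ∃ k, m = k + 1 := Nat.exists_eq_succ_of_ne_zero (NeZero.ne m)
  have h_balanced : ∀ (X : Matrix (Fin n) (Fin n) ℝ) (B : Fin k → Matrix (Fin n) (Fin n) ℝ),
      X.IsSymm → (∀ i, (B i).IsSymm) → frobSq X ≤ ∑ i, frobSq (B i) →
      LiLiIneq (Fin.cons X B) := by
    intro X B hX hB hXB
    refine h₂ _ (Fin.forall_fin_succ.2 ⟨hX, hB⟩) ?_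
    simpa [Finset.sum_filter, Fin.sum_univ_succ, Fin.succ_ne_zero] using hXB
  rw [← Fin.cons_self_tail A]
  exact LiLiIneq.of_head_le h_balanced (hA 0) fun i => hA i.succ

/-- Inductive step for the Li–Li inequality: if P′(n,m−1) holds, and P′(n,m) holds whenever
`‖A₁‖² ≤ Σ_{i=2}^m ‖A_i‖²`, then P′(n,m) holds for all symmetric matrices with
`‖A₁‖ ≥ ‖A₂‖ ≥ … ≥ ‖A_m‖`. -/
theorem li_li_reduction (n m : ℕ) (hn : 1 ≤ n) (hm : 2 ≤ m) [NeZero m]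
    (h₁ : ∀ B : Fin (m - 1) → Matrix (Fin n) (Fin n) ℝ, (∀ i, (B i).IsSymm) →
      2 * ∑ i, ∑ j, (if i < j then frobSq (mcomm (B i) (B j)) else 0) ≤
        (3 / 2) * (∑ i, frobSq (B i)) ^ 2 - ∑ i, (frobSq (B i)) ^ 2)
    (h₂ : ∀ A : Fin m → Matrix (Fin n) (Fin n) ℝ, (∀ i, (A i).IsSymm) →
      frobSq (A 0) ≤ ∑ i ∈ Finset.univ.filter (fun i : Fin m => i ≠ 0), frobSq (A i) →
      2 * ∑ i, ∑ j, (if i < j then frobSq (mcomm (A i) (A j)) else 0) ≤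
        (3 / 2) * (∑ i, frobSq (A i)) ^ 2 - ∑ i, (frobSq (A i)) ^ 2) :
    ∀ A : Fin m → Matrix (Fin n) (Fin n) ℝ, (∀ i, (A i).IsSymm) →
      (∀ i j : Fin m, i ≤ j → frobSq (A j) ≤ frobSq (A i)) →
      2 * ∑ i, ∑ j, (if i < j then frobSq (mcomm (A i) (A j)) else 0) ≤
        (3 / 2) * (∑ i, frobSq (A i)) ^ 2 - ∑ i, (frobSq (A i)) ^ 2 :=
  li_li_reduction_general n m h₂
end

section
/- Fix n ≥ 2 and let N = n(n−1)/2 + 1. Suppose that for all real symmetric n×n matrices A₁, …, A_N one has (Σ_{r=1}^N ‖A_r‖²)² ≥ 2 Σ_{1≤r<s≤N} ‖[A_r,A_s]‖² (the DDVV inequality P(n,N)). Then for every m ≥ 1 and all real symmetric n×n matrices A₁, …, A_m one has (Σ_{r=1}^m ‖A_r‖²)² ≥ 2 Σ_{1≤r<s≤m} ‖[A_r,A_s]‖² (the DDVV inequality P(n,m)). -/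
open Matrix BigOperators

/-!
An orthogonal change of family `A_s ↦ ∑_t O_{st} A_t` preserves both `∑ ‖A_r‖²` and
`∑_{r,s} ‖[A_r, A_s]‖²` (Parseval). Given more than `N` symmetric matrices `A_0, A_1, …`, more than
`n(n-1)/2` commutators `[A_0, A_t]` lie in the space of skew-symmetric matrices, which has that
dimension; so some orthogonal change produces two members `P`, `Q` that commute, and a further
rotation in their plane makes them Frobenius-orthogonal as well. Replacing `P`, `Q` by the single
matrix `P ± Q`, with the sign chosen according to the cross terms, keeps `∑ ‖A_r‖²` and does not
decrease the commutator side, so `P(n, k)` implies `P(n, k + 1)` for `k ≥ N`. Fewer than `N`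
matrices are padded with zeros.
-/

section

open scoped RealInnerProductSpace

attribute [local instance] LieRing.ofAssociativeRing

variable {n : ℕ} {ι κ : Type*} [Fintype ι] [Fintype κ]

lemma mcomm_eq_lie (A B : Matrix (Fin n) (Fin n) ℝ) : mcomm A B = ⁅A, B⁆ :=
  (Ring.lie_def A B).symm

noncomputable def frobInner (A B : Matrix (Fin n) (Fin n) ℝ) : ℝ :=
  ∑ i, ∑ j, A i j * B i j

lemma frobSq_eq_frobInner (A : Matrix (Fin n) (Fin n) ℝ) : frobSq A = frobInner A A := by
  simp only [frobSq, frobInner, sq]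

lemma frobInner_smul_add_smul (a b c d : ℝ) (A B : Matrix (Fin n) (Fin n) ℝ) :
    frobInner (a • A + b • B) (c • A + d • B) =
      a * c * frobSq A + (a * d + b * c) * frobInner A B + b * d * frobSq B := by
  simp only [frobInner, frobSq, Matrix.add_apply, Matrix.smul_apply, smul_eq_mul, Finset.mul_sum,
    ← Finset.sum_add_distrib]
  exact Finset.sum_congr rfl fun i _ => Finset.sum_congr rfl fun j _ => by ring

@[simp]
lemma frobSq_zero : frobSq (0 : Matrix (Fin n) (Fin n) ℝ) = 0 := by
  simp [frobSq]

@[simp]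
lemma frobSq_neg (A : Matrix (Fin n) (Fin n) ℝ) : frobSq (-A) = frobSq A := by
  simp [frobSq]

lemma transpose_lie_of_isSymm {A B : Matrix (Fin n) (Fin n) ℝ} (hA : A.IsSymm) (hB : B.IsSymm) :
    ⁅A, B⁆ᵀ = -⁅A, B⁆ := by
  rw [Ring.lie_def, transpose_sub, transpose_mul, transpose_mul, hA.eq, hB.eq, neg_sub]

noncomputable def linComb (A : ι → Matrix (Fin n) (Fin n) ℝ) (w : EuclideanSpace ℝ ι) :
    Matrix (Fin n) (Fin n) ℝ :=
  ∑ t, w t • A t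

lemma linComb_add_smul (A : ι → Matrix (Fin n) (Fin n) ℝ) (a b : ℝ) (u v : EuclideanSpace ℝ ι) :
    linComb A (a • u + b • v) = a • linComb A u + b • linComb A v := by
  simp only [linComb, PiLp.add_apply, PiLp.smul_apply, smul_eq_mul, add_smul, mul_smul,
    Finset.sum_add_distrib, Finset.smul_sum]

lemma linComb_single [DecidableEq ι] (A : ι → Matrix (Fin n) (Fin n) ℝ) (i : ι) :
    linComb A (EuclideanSpace.single i 1) = A i := by
  simp [linComb]

lemma isSymm_linComb {A : ι → Matrix (Fin n) (Fin n) ℝ} (hA : ∀ t, (A t).IsSymm)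
    (w : EuclideanSpace ℝ ι) : (linComb A w).IsSymm := by
  simp only [linComb, IsSymm, transpose_sum, transpose_smul, fun t => (hA t).eq]

lemma lie_linComb (X : Matrix (Fin n) (Fin n) ℝ) (A : ι → Matrix (Fin n) (Fin n) ℝ)
    (w : EuclideanSpace ℝ ι) : ⁅X, linComb A w⁆ = linComb (fun t => ⁅X, A t⁆) w := by
  simp only [linComb, lie_sum, lie_smul]

lemma linComb_lie (X : Matrix (Fin n) (Fin n) ℝ) (A : ι → Matrix (Fin n) (Fin n) ℝ)
    (w : EuclideanSpace ℝ ι) : ⁅linComb A w, X⁆ = linComb (fun t => ⁅A t, X⁆) w := by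
  simp only [linComb, sum_lie, smul_lie]

/-- Parseval's identity, entry by entry. -/
lemma sum_frobSq_linComb (b : OrthonormalBasis κ ℝ (EuclideanSpace ℝ ι))
    (A : ι → Matrix (Fin n) (Fin n) ℝ) : ∑ s, frobSq (linComb A (b s)) = ∑ t, frobSq (A t) := by
  have entry : ∀ w : EuclideanSpace ℝ ι, ∀ i j,
      linComb A w i j = ⟪w, WithLp.toLp 2 fun t => A t i j⟫ := by
    intro w i j
    simp [linComb, Matrix.sum_apply, PiLp.inner_apply, mul_comm]
  have parseval : ∀ i j, ∑ s, (linComb A (b s) i j) ^ 2 = ∑ t, (A t i j) ^ 2 := by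
    intro i j
    simp only [entry, b.sum_sq_inner_right, EuclideanSpace.real_norm_sq_eq]
  simp only [frobSq]
  rw [Finset.sum_comm]
  conv_rhs => rw [Finset.sum_comm]
  refine Finset.sum_congr rfl fun i _ => ?_
  rw [Finset.sum_comm]
  conv_rhs => rw [Finset.sum_comm]
  exact Finset.sum_congr rfl fun j _ => parseval i j

/-- Twice the commutator side `∑_{r<s} ‖[A r, A s]‖²` of the DDVV inequality. -/
noncomputable def commSqSum (A : ι → Matrix (Fin n) (Fin n) ℝ) : ℝ :=
  ∑ r, ∑ s, frobSq ⁅A r, A s⁆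

lemma commSqSum_linComb (b : OrthonormalBasis κ ℝ (EuclideanSpace ℝ ι))
    (A : ι → Matrix (Fin n) (Fin n) ℝ) : commSqSum (fun s => linComb A (b s)) = commSqSum A := by
  unfold commSqSum
  calc ∑ s, ∑ s', frobSq ⁅linComb A (b s), linComb A (b s')⁆
      = ∑ s, ∑ t, frobSq ⁅linComb A (b s), A t⁆ := by
        simp only [lie_linComb, sum_frobSq_linComb]
    _ = ∑ t, ∑ s, frobSq (linComb (fun u => ⁅A u, A t⁆) (b s)) := by
        rw [Finset.sum_comm]; simp only [linComb_lie]
    _ = ∑ u, ∑ t, frobSq ⁅A u, A t⁆ := by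
        simp only [sum_frobSq_linComb]; exact Finset.sum_comm

lemma commSqSum_option (A : Option ι → Matrix (Fin n) (Fin n) ℝ) :
    commSqSum A = 2 * ∑ t, frobSq ⁅A none, A (some t)⁆ + commSqSum (fun t => A (some t)) := by
  simp only [commSqSum, Fintype.sum_option, lie_self, frobSq_zero, zero_add,
    Finset.sum_add_distrib, ← lie_skew (A none), frobSq_neg]
  ring

lemma Matrix.eq_zero_of_transpose_eq_neg {m : Type*} [LinearOrder m] {M : Matrix m m ℝ}
    (hskew : Mᵀ = -M) (hupper : ∀ i j, i < j → M i j = 0) : M = 0 := by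
  have entry (i j : m) : M j i = -M i j := by
    simpa using congr_fun (congr_fun hskew i) j
  ext i j
  rcases lt_trichotomy i j with h | rfl | h
  · exact hupper i j h
  · simpa [← two_mul] using eq_neg_iff_add_eq_zero.1 (entry i i)
  · simpa [hupper j i h] using entry j i

lemma card_pairs_lt (n : ℕ) :
    Fintype.card {p : Fin n × Fin n // p.1 < p.2} = n.choose 2 := by
  rw [Fintype.card_subtype, ← Finset.univ_product_univ, Finset.card_product_filter_lt,
    Finset.card_univ, Fintype.card_fin]

lemma exists_ne_zero_sum_smul_eq_zero (v : ι → Matrix (Fin n) (Fin n) ℝ)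
    (hv : ∀ t, (v t)ᵀ = -v t) (hcard : n.choose 2 < Fintype.card ι) :
    ∃ y : ι → ℝ, y ≠ 0 ∧ ∑ t, y t • v t = 0 := by
  -- a skew-symmetric matrix is determined by its `n.choose 2` entries above the diagonal
  let upper : (ι → ℝ) →ₗ[ℝ] {p : Fin n × Fin n // p.1 < p.2} → ℝ :=
    LinearMap.pi fun p => entryLinearMap ℝ ℝ p.1.1 p.1.2 ∘ₗ Fintype.linearCombination ℝ v
  obtain ⟨y, hy, hy0⟩ := Submodule.exists_mem_ne_zero_of_ne_bot
    (LinearMap.ker_ne_bot_of_finrank_lt (f := upper) (by simpa [card_pairs_lt] using hcard))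
  refine ⟨y, hy0, Matrix.eq_zero_of_transpose_eq_neg ?_ fun i j hij => ?_⟩
  · simp only [transpose_sum, transpose_smul, hv, smul_neg, Finset.sum_neg_distrib]
  · simpa [upper, Fintype.linearCombination_apply, Matrix.sum_apply] using
      congr_fun (LinearMap.mem_ker.1 hy) ⟨(i, j), hij⟩

lemma exists_orthonormalBasis_apply_eq_pair {E : Type*} [NormedAddCommGroup E]
    [InnerProductSpace ℝ E] [FiniteDimensional ℝ E] [DecidableEq κ]
    (hcard : Module.finrank ℝ E = Fintype.card κ) {p q : κ} (hpq : p ≠ q) {u v : E}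
    (hu : ‖u‖ = 1) (hv : ‖v‖ = 1) (huv : ⟪u, v⟫ = 0) :
    ∃ b : OrthonormalBasis κ ℝ E, b p = u ∧ b q = v := by
  let w : κ → E := fun i => if i = p then u else v
  have hw : Orthonormal ℝ (Set.domRestrict {p, q} w) := by
    rw [orthonormal_iff_ite]
    rintro ⟨i, hi⟩ ⟨j, hj⟩
    simp only [Set.mem_insert_iff, Set.mem_singleton_iff] at hi hj
    rcases hi with rfl | rfl <;> rcases hj with rfl | rfl <;>
      simp [w, hpq, hpq.symm, hu, hv, huv, real_inner_comm u v]
  obtain ⟨b, hb⟩ := hw.exists_orthonormalBasis_extension_of_card_eq hcard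
  exact ⟨b, by simpa [w] using hb p (by simp), by simpa [w, hpq.symm] using hb q (by simp)⟩

lemma orthonormal_rotation {E : Type*} [NormedAddCommGroup E] [InnerProductSpace ℝ E]
    {e y : E} (he : ‖e‖ = 1) (hy : ‖y‖ = 1) (hey : ⟪e, y⟫ = 0) {c s : ℝ} (hcs : c ^ 2 + s ^ 2 = 1) :
    ‖c • e + s • y‖ = 1 ∧ ‖(-s) • e + c • y‖ = 1 ∧ ⟪c • e + s • y, (-s) • e + c • y⟫ = 0 := by
  have expand : ∀ a b a' b' : ℝ, ⟪a • e + b • y, a' • e + b' • y⟫ = a * a' + b * b' := by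
    intro a b a' b'
    simp only [inner_add_left, inner_add_right, real_inner_smul_left, real_inner_smul_right,
      real_inner_self_eq_norm_sq, he, hy, hey, real_inner_comm e y]
    ring
  refine ⟨?_, ?_, by rw [expand]; ring⟩ <;>
  · rw [norm_eq_sqrt_real_inner, expand, Real.sqrt_eq_one]
    linear_combination hcs

lemma exists_rotation_frobInner_eq_zero (X Y : Matrix (Fin n) (Fin n) ℝ) :
    ∃ c s : ℝ, c ^ 2 + s ^ 2 = 1 ∧ frobInner (c • X + s • Y) ((-s) • X + c • Y) = 0 := by
  -- `f θ` is the inner product of the pair rotated by `θ`; rotating by `π / 2` negates it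
  let f : ℝ → ℝ := fun θ => (Real.cos θ ^ 2 - Real.sin θ ^ 2) * frobInner X Y +
    Real.cos θ * Real.sin θ * (frobSq Y - frobSq X)
  have hf : Continuous f := by fun_prop
  have hzero : (0 : ℝ) ∈ Set.uIcc (f 0) (f (Real.pi / 2)) := by
    simp only [f, Real.cos_zero, Real.sin_zero, Real.cos_pi_div_two, Real.sin_pi_div_two]
    rcases le_total 0 (frobInner X Y) with h | h <;> simp [h]
  obtain ⟨θ, -, hθ⟩ := intermediate_value_uIcc hf.continuousOn hzero
  refine ⟨Real.cos θ, Real.sin θ, Real.cos_sq_add_sin_sq θ, ?_⟩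
  rw [frobInner_smul_add_smul]
  linear_combination hθ

lemma exists_unit_lie_linComb_eq_zero (A : Option κ → Matrix (Fin n) (Fin n) ℝ)
    (hA : ∀ o, (A o).IsSymm) (hcard : n.choose 2 < Fintype.card κ) :
    ∃ y : EuclideanSpace ℝ (Option κ), ‖y‖ = 1 ∧ y none = 0 ∧
      ⁅A none, linComb A y⁆ = 0 := by
  classical
  obtain ⟨z, hz0, hz⟩ := exists_ne_zero_sum_smul_eq_zero (fun t => ⁅A none, A (some t)⁆)
    (fun t => transpose_lie_of_isSymm (hA _) (hA _)) hcard
  let y₀ : EuclideanSpace ℝ (Option κ) := WithLp.toLp 2 fun o => o.elim 0 z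
  have hy₀ : y₀ ≠ 0 := fun h => hz0 (funext fun t => by simpa [y₀] using congr_arg (· (some t)) h)
  refine ⟨‖y₀‖⁻¹ • y₀, norm_smul_inv_norm hy₀, by simp [y₀], ?_⟩
  rw [lie_linComb]
  simp only [linComb, PiLp.smul_apply, smul_eq_mul, mul_smul, ← Finset.smul_sum,
    Fintype.sum_option, y₀, Option.elim, zero_smul, zero_add, hz, smul_zero]

lemma exists_orthonormalBasis_lie_eq_zero_frobInner_eq_zero
    (A : Option (Option ι) → Matrix (Fin n) (Fin n) ℝ) (hA : ∀ o, (A o).IsSymm)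
    (hcard : n.choose 2 ≤ Fintype.card ι) :
    ∃ b : OrthonormalBasis (Option (Option ι)) ℝ (EuclideanSpace ℝ (Option (Option ι))),
      ⁅linComb A (b none), linComb A (b (some none))⁆ = 0 ∧
        frobInner (linComb A (b none)) (linComb A (b (some none))) = 0 := by
  classical
  obtain ⟨y, hy, hy_none, hXY⟩ := exists_unit_lie_linComb_eq_zero A hA
    (by rw [Fintype.card_option]; omega)
  let e : EuclideanSpace ℝ (Option (Option ι)) := EuclideanSpace.single none 1
  obtain ⟨c, s, hcs, horth⟩ := exists_rotation_frobInner_eq_zero (A none) (linComb A y)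
  obtain ⟨hu, hv, huv⟩ := orthonormal_rotation (e := e) (by simp [e]) hy
    (by simp [e, EuclideanSpace.inner_single_left, hy_none]) hcs
  obtain ⟨b, hbu, hbv⟩ := exists_orthonormalBasis_apply_eq_pair finrank_euclideanSpace
    (Option.some_ne_none none).symm hu hv huv
  refine ⟨b, ?_, ?_⟩ <;> rw [hbu, hbv, linComb_add_smul, linComb_add_smul, linComb_single]
  · simp [hXY, ← lie_skew (linComb A y) (A none)]
  · exact horth

lemma frobSq_add_smul (A B : Matrix (Fin n) (Fin n) ℝ) (ε : ℝ) :
    frobSq (A + ε • B) = frobSq A + 2 * ε * frobInner A B + ε ^ 2 * frobSq B := by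
  rw [← one_smul ℝ A, frobSq_eq_frobInner, frobInner_smul_add_smul, one_smul]
  ring

lemma exists_merge_pair (P Q : Matrix (Fin n) (Fin n) ℝ) (R : ι → Matrix (Fin n) (Fin n) ℝ)
    (hP : P.IsSymm) (hQ : Q.IsSymm) (horth : frobInner P Q = 0) :
    ∃ C : Matrix (Fin n) (Fin n) ℝ, C.IsSymm ∧ frobSq C = frobSq P + frobSq Q ∧
      ∑ t, (frobSq ⁅P, R t⁆ + frobSq ⁅Q, R t⁆) ≤ ∑ t, frobSq ⁅C, R t⁆ := by
  set cross := ∑ t, frobInner ⁅P, R t⁆ ⁅Q, R t⁆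
  obtain ⟨ε, hε, hcross⟩ : ∃ ε : ℝ, ε ^ 2 = 1 ∧ 0 ≤ ε * cross := by
    rcases le_total 0 cross with h | h
    exacts [⟨1, by norm_num, by linarith⟩, ⟨-1, by norm_num, by linarith⟩]
  refine ⟨P + ε • Q, hP.add (hQ.smul ε), by rw [frobSq_add_smul, horth, hε]; ring, ?_⟩
  simp only [add_lie, smul_lie, frobSq_add_smul, hε, Finset.sum_add_distrib, ← Finset.mul_sum]
  nlinarith

lemma exists_merge (G : Option (Option ι) → Matrix (Fin n) (Fin n) ℝ) (hG : ∀ o, (G o).IsSymm)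
    (hcomm : ⁅G none, G (some none)⁆ = 0) (horth : frobInner (G none) (G (some none)) = 0) :
    ∃ D : Option ι → Matrix (Fin n) (Fin n) ℝ, (∀ o, (D o).IsSymm) ∧
      ∑ o, frobSq (D o) = ∑ o, frobSq (G o) ∧ commSqSum G ≤ commSqSum D := by
  obtain ⟨C, hC, hnorm, hdom⟩ := exists_merge_pair (G none) (G (some none))
    (fun t => G (some (some t))) (hG _) (hG _) horth
  refine ⟨fun o => o.elim C fun t => G (some (some t)), ?_, ?_, ?_⟩
  · rintro (_ | t)
    exacts [hC, hG _]
  · simp only [Fintype.sum_option, Option.elim, hnorm]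
    ring
  · simp only [commSqSum_option, Fintype.sum_option, Option.elim, hcomm, frobSq_zero,
      Finset.sum_add_distrib] at hdom ⊢
    linarith

lemma two_mul_sum_lt_eq_sum [LinearOrder ι] (f : ι → ι → ℝ) (hsymm : ∀ r s, f r s = f s r)
    (hdiag : ∀ r, f r r = 0) :
    2 * ∑ r, ∑ s, (if r < s then f r s else 0) = ∑ r, ∑ s, f r s := by
  have split : ∀ r s, f r s = (if r < s then f r s else 0) + (if s < r then f s r else 0) := by
    intro r s
    rcases lt_trichotomy r s with h | rfl | h
    · simp [h, h.not_gt]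
    · simp [hdiag]
    · simp [h, h.not_gt, hsymm r s]
  calc 2 * ∑ r, ∑ s, (if r < s then f r s else 0)
      = ∑ r, ∑ s, (if r < s then f r s else 0) + ∑ r, ∑ s, (if s < r then f s r else 0) := by
        rw [two_mul, Finset.sum_comm (f := fun r s => if s < r then f s r else 0)]
    _ = ∑ r, ∑ s, f r s := by
        simp only [← Finset.sum_add_distrib, ← split]

lemma two_mul_sum_lt_frobSq_mcomm [LinearOrder ι] (A : ι → Matrix (Fin n) (Fin n) ℝ) :
    2 * ∑ r, ∑ s, (if r < s then frobSq (mcomm (A r) (A s)) else 0) = commSqSum A := by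
  simp only [mcomm_eq_lie]
  refine two_mul_sum_lt_eq_sum _ (fun r s => ?_) (fun r => by simp)
  rw [← lie_skew, frobSq_neg]

/-- `P(n, m)` of the paper is `DDVV n (Fin m)`. -/
def DDVV (n : ℕ) (ι : Type*) [Fintype ι] : Prop :=
  ∀ A : ι → Matrix (Fin n) (Fin n) ℝ, (∀ r, (A r).IsSymm) →
    commSqSum A ≤ (∑ r, frobSq (A r)) ^ 2

theorem DDVV.option_option (h : DDVV n (Option ι)) (hcard : n.choose 2 ≤ Fintype.card ι) :
    DDVV n (Option (Option ι)) := by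
  intro A hA
  obtain ⟨b, hcomm, horth⟩ := exists_orthonormalBasis_lie_eq_zero_frobInner_eq_zero A hA hcard
  obtain ⟨D, hD, hnorm, hdom⟩ := exists_merge _ (fun o => isSymm_linComb hA (b o)) hcomm horth
  calc commSqSum A = commSqSum fun o => linComb A (b o) := (commSqSum_linComb b A).symm
    _ ≤ commSqSum D := hdom
    _ ≤ (∑ o, frobSq (D o)) ^ 2 := h D hD
    _ = (∑ o, frobSq (A o)) ^ 2 := by rw [hnorm, sum_frobSq_linComb]

lemma Function.Embedding.sum_extend_zero {M : Type*} [Zero M] (f : ι ↪ κ) (A : ι → M)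
    (φ : M → ℝ) (hφ : φ 0 = 0) : ∑ x, φ (Function.extend f A 0 x) = ∑ i, φ (A i) := by
  classical
  rw [← Finset.sum_subset (Finset.subset_univ (Finset.univ.map f)), Finset.sum_map]
  · simp only [f.injective.extend_apply]
  · intro x _ hx
    rw [Function.extend_apply' _ _ _ (by simpa using hx), Pi.zero_apply, hφ]

/-- Padding a family with zero matrices changes neither side of the inequality. -/
theorem DDVV.of_embedding (f : ι ↪ κ) (h : DDVV n κ) : DDVV n ι := by
  intro A hA
  have hA' : ∀ x, (Function.extend f A 0 x).IsSymm := by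
    intro x
    by_cases hx : ∃ i, f i = x
    · obtain ⟨i, rfl⟩ := hx
      rw [f.injective.extend_apply]
      exact hA i
    · rw [Function.extend_apply' _ _ _ hx]
      exact isSymm_zero
  have hcomm : commSqSum (Function.extend f A 0) = commSqSum A :=
    (f.sum_extend_zero A (fun M => ∑ y, frobSq ⁅M, Function.extend f A 0 y⁆) (by simp)).trans
      (Finset.sum_congr rfl fun i _ => f.sum_extend_zero A (fun M => frobSq ⁅A i, M⁆) (by simp))
  simpa only [hcomm, f.sum_extend_zero A frobSq frobSq_zero] using h _ hA'

theorem DDVV.of_card_le (h : DDVV n κ) (hcard : Fintype.card ι ≤ Fintype.card κ) : DDVV n ι :=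
  h.of_embedding (Function.Embedding.nonempty_of_card_le hcard).some

end

theorem ddvv_reduction_to_N_general (n : ℕ)
    (hP : ∀ A : Fin (n * (n - 1) / 2 + 1) → Matrix (Fin n) (Fin n) ℝ,
      (∀ r, (A r).IsSymm) →
      (∑ r, frobSq (A r)) ^ 2 ≥
        2 * ∑ r, ∑ s, (if r < s then frobSq (mcomm (A r) (A s)) else 0)) :
    ∀ m : ℕ, 1 ≤ m → ∀ A : Fin m → Matrix (Fin n) (Fin n) ℝ, (∀ r, (A r).IsSymm) →
      (∑ r, frobSq (A r)) ^ 2 ≥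
        2 * ∑ r, ∑ s, (if r < s then frobSq (mcomm (A r) (A s)) else 0) := by
  have base : DDVV n (Fin (n * (n - 1) / 2 + 1)) := by
    intro A hA
    rw [← two_mul_sum_lt_frobSq_mcomm]
    exact hP A hA
  have large : ∀ k, n * (n - 1) / 2 ≤ k → DDVV n (Fin (k + 1)) := by
    intro k hk
    induction k, hk using Nat.le_induction with
    | base => exact base
    | succ k hk ih =>
      have hopt : DDVV n (Option (Fin k)) := ih.of_card_le (by simp)
      exact (hopt.option_option (by simpa [Nat.choose_two_right])).of_card_le (by simp)
  intro m _ A hA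
  rw [two_mul_sum_lt_frobSq_mcomm]
  exact (large (n * (n - 1) / 2 + m) le_self_add).of_card_le
    (by simp only [Fintype.card_fin]; omega) A hA

/-- If `P(n, n(n-1)/2 + 1)` holds, then `P(n, m)` holds for every `m ≥ 1`. -/
theorem ddvv_reduction_to_N (n : ℕ) (hn : 2 ≤ n)
    (hP : ∀ A : Fin (n * (n - 1) / 2 + 1) → Matrix (Fin n) (Fin n) ℝ,
      (∀ r, (A r).IsSymm) →
      (∑ r, frobSq (A r)) ^ 2 ≥
        2 * ∑ r, ∑ s, (if r < s then frobSq (mcomm (A r) (A s)) else 0)) :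
    ∀ m : ℕ, 1 ≤ m → ∀ A : Fin m → Matrix (Fin n) (Fin n) ℝ, (∀ r, (A r).IsSymm) →
      (∑ r, frobSq (A r)) ^ 2 ≥
        2 * ∑ r, ∑ s, (if r < s then frobSq (mcomm (A r) (A s)) else 0) :=
  ddvv_reduction_to_N_general n hP
end
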